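/- arXiv:1802.09372 — 2 statements merged into one kernel-verified Lean document; each statement's English description precedes it below -/
import Mathlib

section
/- Define s_m = d_{m+1} − d_m. Then the sequence (s_j)_{j≥0} is the fixed point of the substitution q ↦ b(q) with initial value s_0 = 0: for every m ≥ 0 and every i with 0 ≤ i ≤ p−1, one has s_{pm+i} = b(s_m)_i, where for q ∈ {0,…,p−2} the block b(q) of length p is given by b(q)_i = i if i ≤ q and b(q)_i = i−1 if i > q, i.e., b(q) is the increasing sequence 0, 1, …, p−2 with the value q repeated twice in a row. -/
open MeasureTheory
open scoped NNReal ENNReal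

namespace Chacon

/-- The space of digit sequences with digits in `{0, …, p-1}`. -/
def Gamma (p : ℕ) : Set (ℕ → ℕ) := {x | ∀ i, x i < p}

/-- `Γ*`: sequences with digits `< p` having infinitely many coordinates `≠ p - 1`. -/
def GammaStar (p : ℕ) : Set (ℕ → ℕ) :=
  {x | (∀ i, x i < p) ∧ {i | x i ≠ p - 1}.Infinite}

/-- The least index `i` with `x i ≠ p - 1`. -/
noncomputable def firstNot (p : ℕ) (x : ℕ → ℕ) : ℕ :=
  sInf {i | x i ≠ p - 1}

/-- `φ(x) = x_i` where `i` is the least index with `x_i ≠ p - 1`. -/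
noncomputable def phi (p : ℕ) (x : ℕ → ℕ) : ℕ :=
  x (firstNot p x)

/-- The odometer `S` (addition of `1` with carry): the initial run of digits
`p - 1` is replaced by zeros, and the first digit `≠ p - 1` is increased by one. -/
noncomputable def odo (p : ℕ) (x : ℕ → ℕ) : ℕ → ℕ :=
  fun i =>
    if i < firstNot p x then 0
    else if i = firstNot p x then x i + 1
    else x i

/-- `φ^(m)(x) = ∑_{j=0}^{m-1} φ(S^j x)`. -/
noncomputable def phiSum (p m : ℕ) (x : ℕ → ℕ) : ℕ :=
  ∑ j ∈ Finset.range m, phi p ((odo p)^[j] x)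

/-- The base-`p` digit sequence of a real number `u`. -/
noncomputable def digitsOf (p : ℕ) (u : ℝ) : ℕ → ℕ :=
  fun i => (⌊u * (p : ℝ) ^ (i + 1)⌋).toNat % p

/-- `λ`: the product probability measure on digit sequences under which the
coordinates are i.i.d., uniformly distributed in `{0, …, p-1}`; it is realized
concretely as the distribution of the base-`p` digit sequence of a uniformly
distributed random point of `[0,1)`. -/
noncomputable def lam (p : ℕ) : Measure (ℕ → ℕ) :=
  Measure.map (digitsOf p) (volume.restrict (Set.Ico (0 : ℝ) 1))

/-- `π_m(j) = λ({x : φ^(m)(x) = j})`. -/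
noncomputable def pim (p m j : ℕ) : ℝ≥0∞ :=
  lam p {x | phiSum p m x = j}

/-- `P_m^p(t) = ∑_{j ≥ 0} π_m(j) t^j`, a real polynomial
(the sum is over `0 ≤ j ≤ m (p-2)` since `0 ≤ φ^(m) ≤ m (p-2)` a.s.). -/
noncomputable def P (p m : ℕ) (t : ℝ) : ℝ :=
  ∑ j ∈ Finset.range (m * (p - 2) + 1), (pim p m j).toReal * t ^ j

/-- The `n`-th triangular number `Δ_n = n (n+1) / 2`. -/
def tri (n : ℕ) : ℕ := n * (n + 1) / 2

/-- The degree `D_m` of `P_m^p`: the largest `j` with `π_m(j) ≠ 0`. -/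
noncomputable def D (p m : ℕ) : ℕ := sSup {j | pim p m j ≠ 0}

/-- The lower degree `d_m` of `P_m^p`: the least `j` with `π_m(j) ≠ 0`. -/
noncomputable def d (p m : ℕ) : ℕ := sInf {j | pim p m j ≠ 0}


/-- `s_m = d_{m+1} - d_m`. -/
noncomputable def sseq (p m : ℕ) : ℕ := d p (m + 1) - d p m

/-- The substitution block `b(q)` of length `p`: the increasing sequence
`0, 1, …, p-2` with the value `q` repeated twice in a row. -/
def blockLower (q i : ℕ) : ℕ := if i ≤ q then i else i - 1


/-!
Write `f n = φ(Sⁿ 0)`, the value of `φ` at the base-`p` digit sequence of `n`. A point of `[0,1)`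
never has all its digits equal to `p - 1` from some index on, so its digit sequence agrees with the
digit sequence of some integer `n` on a prefix long enough to carry `m` odometer steps; conversely
every such prefix is a cylinder of positive measure. Hence the values `j` with `π_m(j) ≠ 0` are
exactly the window sums `W(n, m) = f n + ⋯ + f (n + m - 1)`, and `d_m = min_n W(n, m)`.

Since `f (p k + r) = r` for `r < p - 1` and `f (p k + p - 1) = f k`, a window of length `p m + i`
starting at `p n + a` splits into `m` full periods, the residues mod `p` of `a, …, a + i - 1`
(with `p - 1` counted as `0`), and a window of length `m + ⌊(a + i) / p⌋` starting at `n`.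
Minimising over `a` and `n` gives `d_{pm+i} = m T + d_m + b(s_m)_0 + ⋯ + b(s_m)_{i-1}` with
`T = 0 + 1 + ⋯ + (p - 2)`, and the differences of these are the entries of the block `b(s_m)`.
-/

end Chacon

theorem Nat.succ_eq_mul_of_mod_eq_sub_one {p n : ℕ} (hp : 0 < p) (h : n % p = p - 1) :
    n + 1 = p * (n / p + 1) := by
  have := Nat.div_add_mod n p
  rw [Nat.mul_add, Nat.mul_one]
  omega

theorem Nat.succ_div_mod_of_mod_eq_sub_one {p n : ℕ} (hp : 0 < p) (h : n % p = p - 1) :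
    (n + 1) / p = n / p + 1 ∧ (n + 1) % p = 0 := by
  rw [Nat.succ_eq_mul_of_mod_eq_sub_one hp h, Nat.mul_div_cancel_left _ hp, Nat.mul_mod_right]
  exact ⟨rfl, rfl⟩

theorem Nat.succ_div_mod_of_mod_ne_sub_one {p n : ℕ} (hp : 0 < p) (h : n % p ≠ p - 1) :
    (n + 1) / p = n / p ∧ (n + 1) % p = n % p + 1 := by
  have hlt : n % p + 1 < p := by have := Nat.mod_lt n hp; omega
  have hn : n + 1 = (n % p + 1) + p * (n / p) := by have := Nat.div_add_mod n p; omega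
  rw [hn, Nat.add_mul_div_left _ _ hp, Nat.div_eq_of_lt hlt, Nat.add_mul_mod_self_left,
    Nat.mod_eq_of_lt hlt]
  exact ⟨zero_add _, rfl⟩

namespace Function.Periodic

variable {M : Type*} [AddCancelCommMonoid M] {f : ℕ → M} {p : ℕ}

theorem sum_Ico_add_period (hf : Periodic f p) (b : ℕ) :
    ∑ k ∈ Finset.Ico b (b + p), f k = ∑ k ∈ Finset.range p, f k := by
  induction b with
  | zero => rw [zero_add, Finset.range_eq_Ico]
  | succ b ih =>
    have htop := Finset.sum_Ico_succ_top (show b ≤ b + p by omega) f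
    have hbot := Finset.sum_eq_sum_Ico_succ_bot (show b < b + p + 1 by omega) f
    rw [hf b, hbot, add_comm _ (f b)] at htop
    rw [← ih, show b + 1 + p = b + p + 1 by omega]
    exact add_left_cancel htop

theorem sum_Ico_add_mul_add (hf : Periodic f p) (b m i : ℕ) :
    ∑ k ∈ Finset.Ico b (b + (p * m + i)), f k
      = m • ∑ k ∈ Finset.range p, f k + ∑ t ∈ Finset.range i, f (b + t) := by
  induction m with
  | zero => simp [Finset.sum_Ico_eq_sum_range]
  | succ m ih =>
    rw [show b + (p * (m + 1) + i) = b + (p * m + i) + p by ring,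
      ← Finset.sum_Ico_consecutive _ (by omega : b ≤ b + (p * m + i)) (by omega),
      ih, hf.sum_Ico_add_period, succ_nsmul]
    abel

end Function.Periodic

namespace Chacon

section FirstNot

variable {p : ℕ} {x y : ℕ → ℕ}

theorem firstNot_spec (h : ∃ i, x i ≠ p - 1) :
    x (firstNot p x) ≠ p - 1 ∧ ∀ i < firstNot p x, x i = p - 1 :=
  ⟨Nat.sInf_mem h, fun _ hi => not_not.1 (Nat.notMem_of_lt_sInf hi)⟩

theorem firstNot_eq_of {k : ℕ} (hk : x k ≠ p - 1) (hlt : ∀ i < k, x i = p - 1) :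
    firstNot p x = k :=
  le_antisymm (Nat.sInf_le hk) (not_lt.1 fun h => (firstNot_spec ⟨k, hk⟩).1 (hlt _ h))

variable {t : ℕ}

theorem firstNot_eq_of_eqOn (hxy : ∀ i ≤ t, x i = y i) (hy : ∃ i ≤ t, y i ≠ p - 1) :
    firstNot p x = firstNot p y ∧ firstNot p y ≤ t := by
  obtain ⟨k, hkt, hk⟩ := hy
  have hle : firstNot p y ≤ t := (Nat.sInf_le hk).trans hkt
  obtain ⟨hne, hlt⟩ := firstNot_spec ⟨k, hk⟩
  refine ⟨firstNot_eq_of (by rwa [hxy _ hle]) fun i hi => ?_, hle⟩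
  rw [hxy i (by omega)]
  exact hlt i hi

theorem phi_eq_of_eqOn (hxy : ∀ i ≤ t, x i = y i) (hy : ∃ i ≤ t, y i ≠ p - 1) :
    phi p x = phi p y := by
  obtain ⟨hfirst, hle⟩ := firstNot_eq_of_eqOn hxy hy
  rw [phi, phi, hfirst, hxy _ hle]

theorem odo_eqOn_of_eqOn (hxy : ∀ i ≤ t, x i = y i) (hy : ∃ i ≤ t, y i ≠ p - 1) :
    ∀ i ≤ t, odo p x i = odo p y i := by
  intro i hi
  simp only [odo, (firstNot_eq_of_eqOn hxy hy).1, hxy i hi]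

end FirstNot

theorem phiSum_succ (p m : ℕ) (x : ℕ → ℕ) :
    phiSum p (m + 1) x = phi p x + phiSum p m (odo p x) := by
  simp only [phiSum, Finset.sum_range_succ', Function.iterate_succ_apply,
    Function.iterate_zero_apply]
  ring

/-- The base-`p` digits of `n`, least significant first: the point that the odometer reaches
from `0` after `n` steps. -/
def digitSeq (p n : ℕ) : ℕ → ℕ := fun i => n / p ^ i % p

section DigitSeq

variable {p : ℕ}

@[simp] theorem digitSeq_zero (n : ℕ) : digitSeq p n 0 = n % p := by simp [digitSeq]

theorem digitSeq_succ (n i : ℕ) : digitSeq p n (i + 1) = digitSeq p (n / p) i := by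
  simp only [digitSeq, Nat.div_div_eq_div_mul, pow_succ']

theorem firstNot_digitSeq_of_ne {n : ℕ} (h : n % p ≠ p - 1) : firstNot p (digitSeq p n) = 0 :=
  firstNot_eq_of (by simpa) (by simp)

variable (hp : 2 ≤ p)
include hp

theorem exists_digitSeq_ne (n : ℕ) : ∃ i, digitSeq p n i ≠ p - 1 :=
  ⟨n, by simp [digitSeq, Nat.div_eq_of_lt (Nat.lt_pow_self (by omega : 1 < p))]; omega⟩

theorem exists_digitSeq_ne_of_lt {t n : ℕ} (hn : n + 1 < p ^ (t + 1)) :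
    ∃ i ≤ t, digitSeq p n i ≠ p - 1 := by
  induction t generalizing n with
  | zero =>
    rw [zero_add, pow_one] at hn
    exact ⟨0, le_rfl, by rw [digitSeq_zero, Nat.mod_eq_of_lt (by omega)]; omega⟩
  | succ t ih =>
    by_cases h : n % p = p - 1
    · have : n / p + 1 < p ^ (t + 1) := by
        rw [Nat.succ_eq_mul_of_mod_eq_sub_one (by omega) h, pow_succ' p (t + 1)] at hn
        exact Nat.lt_of_mul_lt_mul_left hn
      obtain ⟨i, hi, hne⟩ := ih this
      exact ⟨i + 1, by omega, by rwa [digitSeq_succ]⟩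
    · exact ⟨0, by omega, by simpa⟩

theorem firstNot_digitSeq_of_eq {n : ℕ} (h : n % p = p - 1) :
    firstNot p (digitSeq p n) = firstNot p (digitSeq p (n / p)) + 1 := by
  obtain ⟨hne, hlt⟩ := firstNot_spec (exists_digitSeq_ne hp (n / p))
  refine firstNot_eq_of (by rwa [digitSeq_succ]) fun i hi => ?_
  rcases i with _ | i
  · simpa
  · rw [digitSeq_succ]
    exact hlt i (by omega)

theorem odo_digitSeq (n : ℕ) : odo p (digitSeq p n) = digitSeq p (n + 1) := by
  induction n using Nat.strong_induction_on with
  | _ n ih =>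
    funext i
    by_cases h : n % p = p - 1
    · obtain ⟨hdiv, hmod⟩ := Nat.succ_div_mod_of_mod_eq_sub_one (by omega) h
      have hfirst := firstNot_digitSeq_of_eq hp h
      rcases i with _ | i
      · simp [odo, hfirst, hmod]
      · have hn : 0 < n := Nat.pos_of_ne_zero fun h0 => by simp [h0] at h; omega
        rw [digitSeq_succ, hdiv, ← ih (n / p) (Nat.div_lt_self hn (by omega))]
        simp only [odo, hfirst, digitSeq_succ, Nat.add_lt_add_iff_right, Nat.add_right_cancel_iff]
    · obtain ⟨hdiv, hmod⟩ := Nat.succ_div_mod_of_mod_ne_sub_one (by omega) h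
      have hfirst := firstNot_digitSeq_of_ne h
      rcases i with _ | i
      · simp [odo, hfirst, hmod]
      · simp [odo, hfirst, digitSeq_succ, hdiv]

theorem iterate_odo_digitSeq (n j : ℕ) : (odo p)^[j] (digitSeq p n) = digitSeq p (n + j) := by
  induction j with
  | zero => rfl
  | succ j ih => rw [Function.iterate_succ_apply', ih, odo_digitSeq hp, add_assoc]

end DigitSeq

noncomputable def digitPhi (p n : ℕ) : ℕ := phi p (digitSeq p n)

noncomputable def windowSum (p n m : ℕ) : ℕ := ∑ k ∈ Finset.Ico n (n + m), digitPhi p k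

section DigitPhi

variable {p : ℕ} (hp : 2 ≤ p)
include hp

theorem phiSum_digitSeq (m n : ℕ) : phiSum p m (digitSeq p n) = windowSum p n m := by
  rw [windowSum, Finset.sum_Ico_eq_sum_range, add_tsub_cancel_left]
  simp only [phiSum, iterate_odo_digitSeq hp, digitPhi]

theorem phiSum_eq_windowSum_of_eqOn {t n m : ℕ} {x : ℕ → ℕ}
    (hx : ∀ i ≤ t, x i = digitSeq p n i) (hnm : n + m < p ^ (t + 1)) :
    phiSum p m x = windowSum p n m := by
  rw [← phiSum_digitSeq hp]
  induction m generalizing x n with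
  | zero => rfl
  | succ m ih =>
    have hne := exists_digitSeq_ne_of_lt hp (t := t) (n := n) (by omega)
    have hodo : ∀ i ≤ t, odo p x i = digitSeq p (n + 1) i := fun i hi => by
      rw [odo_eqOn_of_eqOn hx hne i hi, odo_digitSeq hp]
    rw [phiSum_succ, phiSum_succ, phi_eq_of_eqOn hx hne, ih hodo (by omega), odo_digitSeq hp]

theorem digitPhi_eq (n : ℕ) :
    digitPhi p n = if n % p = p - 1 then digitPhi p (n / p) else n % p := by
  unfold digitPhi phi
  split_ifs with h
  · rw [firstNot_digitSeq_of_eq hp h, digitSeq_succ]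
  · rw [firstNot_digitSeq_of_ne h, digitSeq_zero]

theorem digitPhi_le (n : ℕ) : digitPhi p n ≤ p - 2 := by
  have hne := (firstNot_spec (exists_digitSeq_ne hp n)).1
  have hlt : digitSeq p n (firstNot p (digitSeq p n)) < p := Nat.mod_lt _ (by omega)
  unfold digitPhi phi
  omega

end DigitPhi

def rho (p k : ℕ) : ℕ := if k % p = p - 1 then 0 else k % p

theorem rho_periodic (p : ℕ) : Function.Periodic (rho p) p := fun k => by simp [rho]

theorem rho_of_lt {p k : ℕ} (h : k < p - 1) : rho p k = k := by
  rw [rho, Nat.mod_eq_of_lt (by omega), if_neg (by omega)]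

theorem digitPhi_eq_rho_add {p : ℕ} (hp : 2 ≤ p) (n : ℕ) :
    digitPhi p n = rho p n + if n % p = p - 1 then digitPhi p (n / p) else 0 := by
  rw [digitPhi_eq hp, rho]
  split_ifs <;> simp

def residueSum (p a i : ℕ) : ℕ := ∑ t ∈ Finset.range i, rho p (a + t)

section Window

variable {p : ℕ} (hp : 2 ≤ p)
include hp

theorem sum_Ico_digitPhi {a b : ℕ} (hab : a ≤ b) :
    ∑ k ∈ Finset.Ico a b, digitPhi p k
      = ∑ k ∈ Finset.Ico a b, rho p k + ∑ l ∈ Finset.Ico (a / p) (b / p), digitPhi p l := by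
  induction b, hab using Nat.le_induction with
  | base => simp
  | succ b hab ih =>
    rw [Finset.sum_Ico_succ_top hab, Finset.sum_Ico_succ_top hab, ih, digitPhi_eq_rho_add hp b]
    by_cases h : b % p = p - 1
    · rw [(Nat.succ_div_mod_of_mod_eq_sub_one (by omega) h).1,
        Finset.sum_Ico_succ_top (Nat.div_le_div_right hab), if_pos h]
      ring
    · rw [(Nat.succ_div_mod_of_mod_ne_sub_one (by omega) h).1, if_neg h]
      ring

theorem windowSum_mul_add (n m : ℕ) {a i : ℕ} (ha : a < p) :
    windowSum p (p * n + a) (p * m + i)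
      = m * residueSum p 0 p + residueSum p a i + windowSum p n (m + (a + i) / p) := by
  have hp0 : 0 < p := by omega
  have hshift : ∀ t, rho p (p * n + a + t) = rho p (a + t) := fun t => by
    rw [show p * n + a + t = a + t + n * p by ring]
    simpa using (rho_periodic p).nat_mul n (a + t)
  rw [windowSum, sum_Ico_digitPhi hp (by omega), (rho_periodic p).sum_Ico_add_mul_add,
    Nat.mul_add_div hp0, Nat.div_eq_of_lt ha, add_zero,
    show p * n + a + (p * m + i) = (a + i) + p * (n + m) by ring, Nat.add_mul_div_left _ _ hp0,
    show (a + i) / p + (n + m) = n + (m + (a + i) / p) by ring]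
  simp only [residueSum, zero_add, smul_eq_mul, windowSum, hshift]

end Window

def blockSum (q i : ℕ) : ℕ := ∑ t ∈ Finset.range i, blockLower q t

theorem blockSum_succ (q i : ℕ) : blockSum q (i + 1) = blockSum q i + blockLower q i :=
  Finset.sum_range_succ _ _

theorem blockSum_add_sub (q i : ℕ) : blockSum q i + (i - 1 - q) = ∑ t ∈ Finset.range i, t := by
  induction i with
  | zero => simp [blockSum]
  | succ i ih =>
    rw [blockSum_succ, Finset.sum_range_succ, ← ih, blockLower]
    split_ifs <;> omega

theorem residueSum_of_add_lt {p a i : ℕ} (h : a + i < p) :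
    residueSum p a i = ∑ t ∈ Finset.range i, (a + t) :=
  Finset.sum_congr rfl fun t ht => rho_of_lt (by rw [Finset.mem_range] at ht; omega)

theorem residueSum_of_le_add {p a i : ℕ} (ha : a < p) (hi : i ≤ p) (h : p ≤ a + i) :
    residueSum p a i
      = ∑ t ∈ Finset.range (p - 1 - a), (a + t) + ∑ t ∈ Finset.range (a + i - p), t := by
  obtain ⟨u, rfl⟩ : ∃ u, i = (p - 1 - a) + 1 + u := ⟨a + i - p, by omega⟩
  have hwrap : rho p (a + (p - 1 - a + 0)) = 0 := by
    rw [rho, if_pos (by rw [Nat.mod_eq_of_lt (by omega)]; omega)]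
  have hafter : ∀ t ∈ Finset.range u, rho p (a + (p - 1 - a + 1 + t)) = t := fun t ht => by
    rw [Finset.mem_range] at ht
    rw [show a + (p - 1 - a + 1 + t) = t + p by omega, rho_periodic p t, rho_of_lt (by omega)]
  rw [residueSum, Finset.sum_range_add, Finset.sum_range_add, Finset.sum_range_one, hwrap,
    add_zero, Finset.sum_congr rfl hafter, show a + (p - 1 - a + 1 + u) - p = u by omega]
  exact congrArg (· + _) (residueSum_of_add_lt (by omega))

theorem blockSum_le_residueSum {p a i : ℕ} (q : ℕ) (ha : a < p) (hi : i ≤ p) :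
    blockSum q i ≤ residueSum p a i + (a + i) / p * q := by
  have hC := blockSum_add_sub q i
  rcases lt_or_ge (a + i) p with h | h
  · rw [residueSum_of_add_lt h]
    have : ∑ t ∈ Finset.range i, t ≤ ∑ t ∈ Finset.range i, (a + t) :=
      Finset.sum_le_sum fun t _ => Nat.le_add_left t a
    omega
  · have hc : (a + i) / p = 1 := by
      rw [Nat.div_eq_iff (by omega)]
      omega
    rw [residueSum_of_le_add ha hi h, hc, one_mul]
    obtain ⟨s, hs⟩ : ∃ s, p - 1 - a = s := ⟨_, rfl⟩
    obtain ⟨u, hu⟩ : ∃ u, a + i - p = u := ⟨_, rfl⟩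
    have hsplit : ∑ t ∈ Finset.range i, t
        = ∑ t ∈ Finset.range s, t + s + (u * (s + 1) + ∑ t ∈ Finset.range u, t) := by
      rw [show i = s + 1 + u by omega, Finset.sum_range_add, Finset.sum_range_add,
        Finset.sum_range_one, add_zero, Finset.sum_add_distrib, Finset.sum_const,
        Finset.card_range, smul_eq_mul]
    have hua : u * s ≤ s * a := by rw [mul_comm s]; exact Nat.mul_le_mul_right s (by omega)
    rw [hs, hu, Finset.sum_add_distrib, Finset.sum_const, Finset.card_range, smul_eq_mul]
    rw [Nat.mul_add, mul_one] at hsplit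
    omega

theorem exists_residueSum_eq {p q i : ℕ} (hp : 2 ≤ p) (hq : q ≤ p - 2) (hi : i ≤ p) :
    ∃ a < p, residueSum p a i + (a + i) / p * q = blockSum q i := by
  have hC := blockSum_add_sub q i
  by_cases h : i ≤ q + 1
  · refine ⟨0, by omega, ?_⟩
    have hlt : 0 + i < p := by omega
    rw [residueSum_of_add_lt hlt, Nat.div_eq_of_lt hlt]
    simp only [zero_add, zero_mul, add_zero]
    omega
  · refine ⟨p - 1, by omega, ?_⟩
    obtain ⟨j, rfl⟩ : ∃ j, i = j + 1 := ⟨i - 1, by omega⟩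
    rw [residueSum_of_le_add (a := p - 1) (by omega) hi (by omega),
      show (p - 1 + (j + 1)) / p = 1 by rw [Nat.div_eq_iff (by omega)]; omega]
    rw [Finset.sum_range_succ] at hC
    simp only [Nat.sub_self, Finset.range_zero, Finset.sum_empty, zero_add, one_mul,
      show p - 1 + (j + 1) - p = j by omega]
    omega

noncomputable def windowMin (p m : ℕ) : ℕ := sInf (Set.range fun n => windowSum p n m)

section WindowMin

variable {p : ℕ}

theorem exists_windowSum_eq_windowMin (p m : ℕ) : ∃ n, windowSum p n m = windowMin p m :=
  Nat.sInf_mem (Set.range_nonempty _)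

theorem windowMin_le_windowSum (p n m : ℕ) : windowMin p m ≤ windowSum p n m :=
  Nat.sInf_le ⟨n, rfl⟩

theorem windowSum_succ (p n m : ℕ) :
    windowSum p n (m + 1) = windowSum p n m + digitPhi p (n + m) := by
  rw [windowSum, windowSum, ← add_assoc, Finset.sum_Ico_succ_top (by omega)]

theorem windowMin_le_windowMin_succ (p m : ℕ) : windowMin p m ≤ windowMin p (m + 1) := by
  obtain ⟨n, hn⟩ := exists_windowSum_eq_windowMin p (m + 1)
  rw [← hn, windowSum_succ]
  exact (windowMin_le_windowSum p n m).trans (Nat.le_add_right _ _)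

theorem windowMin_succ_le (hp : 2 ≤ p) (m : ℕ) :
    windowMin p (m + 1) ≤ windowMin p m + (p - 2) := by
  obtain ⟨n, hn⟩ := exists_windowSum_eq_windowMin p m
  calc windowMin p (m + 1) ≤ windowSum p n (m + 1) := windowMin_le_windowSum p n (m + 1)
    _ = windowMin p m + digitPhi p (n + m) := by rw [windowSum_succ, hn]
    _ ≤ windowMin p m + (p - 2) := Nat.add_le_add_left (digitPhi_le hp (n + m)) _

theorem windowMin_mul_add (hp : 2 ≤ p) (m : ℕ) {i : ℕ} (hi : i ≤ p) :
    windowMin p (p * m + i) = m * residueSum p 0 p + windowMin p m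
      + blockSum (windowMin p (m + 1) - windowMin p m) i := by
  set q := windowMin p (m + 1) - windowMin p m
  have hcarry : ∀ {a}, a < p →
      windowMin p (m + (a + i) / p) = windowMin p m + (a + i) / p * q := by
    intro a ha
    have hmono := windowMin_le_windowMin_succ p m
    have : (a + i) / p < 2 := (Nat.div_lt_iff_lt_mul (by omega)).2 (by omega)
    interval_cases (a + i) / p
    · simp
    · rw [one_mul]
      omega
  apply le_antisymm
  · obtain ⟨a, ha, hA⟩ :=
      exists_residueSum_eq hp (q := q) (by have := windowMin_succ_le hp m; omega) hi
    obtain ⟨n, hn⟩ := exists_windowSum_eq_windowMin p (m + (a + i) / p)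
    calc windowMin p (p * m + i) ≤ windowSum p (p * n + a) (p * m + i) :=
          windowMin_le_windowSum ..
      _ = _ := by rw [windowSum_mul_add hp n m ha, hn, hcarry ha, ← hA]; ring
  · refine le_csInf (Set.range_nonempty _) ?_
    rintro _ ⟨n, rfl⟩
    have ha := Nat.mod_lt n (show 0 < p by omega)
    dsimp only
    rw [← Nat.div_add_mod n p, windowSum_mul_add hp _ _ ha]
    have hmin := windowMin_le_windowSum p (n / p) (m + (n % p + i) / p)
    rw [hcarry ha] at hmin
    have := blockSum_le_residueSum q ha hi
    omega

end WindowMin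

section RealDigits

variable {p : ℕ}

theorem digitsOf_eq_floor (u : ℝ) (i : ℕ) : digitsOf p u i = ⌊u * (p : ℝ) ^ (i + 1)⌋₊ % p := by
  rw [digitsOf, Int.floor_toNat]

theorem digitsOf_add_div_zero {d : ℕ} {u : ℝ} (hd : d < p) (hu₀ : 0 ≤ u) (hu₁ : u < 1) :
    digitsOf p ((d + u) / p) 0 = d := by
  have hp : (p : ℝ) ≠ 0 := Nat.cast_ne_zero.2 (by omega)
  rw [digitsOf_eq_floor, zero_add, pow_one, div_mul_cancel₀ _ hp, add_comm,
    Nat.floor_add_natCast hu₀, Nat.floor_eq_zero.2 hu₁, zero_add, Nat.mod_eq_of_lt hd]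

theorem digitsOf_add_div_succ (hp : 0 < p) (d : ℕ) {u : ℝ} (hu₀ : 0 ≤ u) (i : ℕ) :
    digitsOf p ((d + u) / p) (i + 1) = digitsOf p u i := by
  have hp' : (p : ℝ) ≠ 0 := by positivity
  have : (d + u) / p * (p : ℝ) ^ (i + 1 + 1)
      = u * (p : ℝ) ^ (i + 1) + ((d * p ^ i * p : ℕ) : ℝ) := by
    push_cast
    field_simp
    ring
  rw [digitsOf_eq_floor, digitsOf_eq_floor, this, Nat.floor_add_natCast (by positivity),
    Nat.add_mul_mod_self_right]

theorem exists_Ico_forall_digitsOf_eq (hp : 0 < p) (K n : ℕ) :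
    ∃ c : ℝ, 0 ≤ c ∧ c + ((p : ℝ) ^ K)⁻¹ ≤ 1 ∧
      ∀ u ∈ Set.Ico c (c + ((p : ℝ) ^ K)⁻¹), ∀ i < K, digitsOf p u i = digitSeq p n i := by
  induction K generalizing n with
  | zero => exact ⟨0, le_rfl, by simp, fun _ _ i hi => absurd hi (Nat.not_lt_zero i)⟩
  | succ K ih =>
    obtain ⟨c, hc₀, hc₁, hc⟩ := ih (n / p)
    have hp' : (0 : ℝ) < p := by exact_mod_cast hp
    have hr : ((n % p : ℕ) : ℝ) + 1 ≤ p := by exact_mod_cast Nat.mod_lt n hp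
    have hlen : ((p : ℝ) ^ (K + 1))⁻¹ = ((p : ℝ) ^ K)⁻¹ / p := by
      rw [pow_succ, mul_inv, div_eq_mul_inv]
    refine ⟨(((n % p : ℕ) : ℝ) + c) / p, by positivity, ?_, ?_⟩
    · rw [hlen, ← add_div, div_le_one hp']
      linarith
    · rintro u ⟨hu₁, hu₂⟩ i hi
      rw [hlen, ← add_div] at hu₂
      rw [div_le_iff₀ hp'] at hu₁
      rw [lt_div_iff₀ hp'] at hu₂
      have hv : u * p - (n % p : ℕ) ∈ Set.Ico c (c + ((p : ℝ) ^ K)⁻¹) := ⟨by linarith, by linarith⟩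
      have hu : u = ((n % p : ℕ) + (u * p - (n % p : ℕ))) / p := by field_simp; ring
      have hv₀ : 0 ≤ u * p - (n % p : ℕ) := hc₀.trans hv.1
      rw [hu]
      rcases i with _ | i
      · rw [digitsOf_add_div_zero (Nat.mod_lt n hp) hv₀ (by linarith [hv.2]), digitSeq_zero]
      · rw [digitsOf_add_div_succ hp _ hv₀, digitSeq_succ]
        exact hc _ hv i (by omega)

theorem exists_digitsOf_ne (hp : 2 ≤ p) {u : ℝ} (hu : 0 ≤ u) (t₀ : ℕ) :
    ∃ t, t₀ ≤ t ∧ digitsOf p u t ≠ p - 1 := by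
  -- Otherwise the gap `⌊u pᵏ⌋₊ + 1 - u pᵏ > 0` would be multiplied by `p` at every step `k ≥ t₀`.
  by_contra! h
  set F : ℕ → ℕ := fun k => ⌊u * (p : ℝ) ^ k⌋₊ with hF
  have hstep : ∀ k ≥ t₀, F (k + 1) + 1 = p * (F k + 1) := by
    intro k hk
    have hdiv : F (k + 1) / p = F k := by
      simp only [hF, ← Nat.floor_div_natCast, pow_succ, mul_div_assoc,
        div_self (show (p : ℝ) ≠ 0 by positivity), mul_one]
    have hmod : F (k + 1) % p = p - 1 := by rw [← h k hk, digitsOf_eq_floor]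
    have := Nat.div_add_mod (F (k + 1)) p
    rw [hdiv, hmod] at this
    rw [Nat.mul_add, mul_one]
    omega
  have hgrow : ∀ s, F (t₀ + s) + 1 = p ^ s * (F t₀ + 1) := by
    intro s
    induction s with
    | zero => simp
    | succ s ih => rw [← add_assoc, hstep _ (by omega), ih, pow_succ']; ring
  have hε : 0 < (F t₀ + 1 : ℝ) - u * p ^ t₀ := by
    have := Nat.lt_floor_add_one (u * (p : ℝ) ^ t₀)
    linarith
  obtain ⟨s, hs⟩ := pow_unbounded_of_one_lt (1 / ((F t₀ + 1 : ℝ) - u * p ^ t₀))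
    (by exact_mod_cast hp : (1 : ℝ) < p)
  have hfloor : (F (t₀ + s) : ℝ) ≤ u * p ^ (t₀ + s) := Nat.floor_le (by positivity)
  have hcast : (F (t₀ + s) : ℝ) + 1 = p ^ s * (F t₀ + 1) := by exact_mod_cast hgrow s
  rw [div_lt_iff₀ hε] at hs
  rw [pow_add] at hfloor
  nlinarith

theorem exists_digitSeq_eqOn (hp : 0 < p) {x : ℕ → ℕ} (hx : ∀ i, x i < p) (t : ℕ) :
    ∃ n, n < p ^ t * (x t + 1) ∧ ∀ i ≤ t, digitSeq p n i = x i := by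
  induction t generalizing x with
  | zero => exact ⟨x 0, by simp, fun i hi => by simp [Nat.le_zero.1 hi, Nat.mod_eq_of_lt (hx 0)]⟩
  | succ t ih =>
    obtain ⟨n, hn, hdig⟩ := ih (x := fun i => x (i + 1)) fun i => hx _
    refine ⟨x 0 + p * n, ?_, fun i hi => ?_⟩
    · have hle := Nat.mul_le_mul_left p hn
      have := hx 0
      rw [pow_succ', mul_assoc]
      rw [Nat.mul_succ] at hle
      omega
    · rcases i with _ | i
      · simp [Nat.add_mul_mod_self_left, Nat.mod_eq_of_lt (hx 0)]
      · rw [digitSeq_succ, Nat.add_mul_div_left _ _ hp, Nat.div_eq_of_lt (hx 0), zero_add]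
        exact hdig i (by omega)

end RealDigits

theorem measurableSet_firstNot_eq (p n : ℕ) : MeasurableSet {x : ℕ → ℕ | firstNot p x = n} := by
  have : {x : ℕ → ℕ | firstNot p x = n}
      = {x | x n ≠ p - 1 ∧ ∀ i < n, x i = p - 1} ∪ {x | n = 0 ∧ ∀ i, x i = p - 1} := by
    ext x
    simp only [Set.mem_ofPred_eq, Set.mem_union]
    constructor
    · rintro rfl
      by_cases h : ∃ i, x i ≠ p - 1
      · exact Or.inl (firstNot_spec h)
      · replace h := not_exists_not.1 h
        exact Or.inr ⟨Nat.sInf_eq_zero.2 (Or.inr (by ext i; simp [h])), h⟩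
    · rintro (⟨hk, hlt⟩ | ⟨rfl, h⟩)
      · exact firstNot_eq_of hk hlt
      · exact Nat.sInf_eq_zero.2 (Or.inr (by ext i; simp [h]))
  rw [this]
  exact (by measurability : MeasurableSet _).union (by measurability)

theorem measurable_firstNot (p : ℕ) : Measurable (firstNot p) :=
  measurable_to_countable' (measurableSet_firstNot_eq p)

theorem measurable_phi (p : ℕ) : Measurable (phi p) :=
  (measurable_from_prod_countable_left (f := fun q : (ℕ → ℕ) × ℕ => q.1 q.2)
    measurable_pi_apply).comp (measurable_id.prodMk (measurable_firstNot p))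

theorem measurable_odo (p : ℕ) : Measurable (odo p) :=
  measurable_pi_lambda _ fun i =>
    (measurable_from_prod_countable_left
      (f := fun q : (ℕ → ℕ) × ℕ => if i < q.2 then 0 else if i = q.2 then q.1 i + 1 else q.1 i)
      fun n => (measurable_from_top
        (f := fun w : ℕ => if i < n then 0 else if i = n then w + 1 else w)).comp
          (measurable_pi_apply i)).comp
      (measurable_id.prodMk (measurable_firstNot p))

theorem measurable_phiSum (p m : ℕ) : Measurable (phiSum p m) :=
  Finset.measurable_sum _ fun j _ => (measurable_phi p).comp ((measurable_odo p).iterate j)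

theorem measurable_digitsOf (p : ℕ) : Measurable (digitsOf p) := by
  unfold digitsOf
  fun_prop

theorem pim_eq_volume (p m j : ℕ) :
    pim p m j = volume ({u | phiSum p m (digitsOf p u) = j} ∩ Set.Ico 0 1) := by
  have hS : MeasurableSet {x : ℕ → ℕ | phiSum p m x = j} :=
    measurable_phiSum p m (measurableSet_singleton j)
  rw [pim, lam, Measure.map_apply (measurable_digitsOf p) hS,
    Measure.restrict_apply (measurable_digitsOf p hS)]
  rfl

theorem pim_ne_zero_iff {p : ℕ} (hp : 2 ≤ p) (m j : ℕ) :
    pim p m j ≠ 0 ↔ ∃ n, windowSum p n m = j := by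
  rw [pim_eq_volume]
  constructor
  · intro h
    obtain ⟨u, rfl, hu₀, -⟩ := nonempty_of_measure_ne_zero h
    have hx : ∀ i, digitsOf p u i < p := fun i => Nat.mod_lt _ (by omega)
    obtain ⟨t, hmt, hxt⟩ := exists_digitsOf_ne hp hu₀ m
    obtain ⟨n, hn, hdig⟩ := exists_digitSeq_eqOn (by omega) hx t
    refine ⟨n, (phiSum_eq_windowSum_of_eqOn hp (fun i hi => (hdig i hi).symm) ?_).symm⟩
    have hle : p ^ t * (digitsOf p u t + 1) ≤ p ^ t * (p - 1) :=
      Nat.mul_le_mul_left _ (by have := hx t; omega)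
    have hmt' : m < p ^ t := hmt.trans_lt (Nat.lt_pow_self (by omega))
    have : p ^ (t + 1) = p ^ t * (p - 1) + p ^ t := by
      rw [pow_succ, ← Nat.mul_succ, Nat.succ_eq_add_one, Nat.sub_add_cancel (by omega)]
    omega
  · rintro ⟨n, rfl⟩
    have hnm : n + m < p ^ (n + m + 1) :=
      (Nat.lt_pow_self (by omega)).trans (Nat.pow_lt_pow_right (a := p) (by omega) (by omega))
    obtain ⟨c, hc₀, hc₁, hc⟩ := exists_Ico_forall_digitsOf_eq (p := p) (by omega) (n + m + 1) n
    refine (measure_pos_of_superset (s := Set.Ico c (c + ((p : ℝ) ^ (n + m + 1))⁻¹)) ?_ ?_).ne'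
    · intro u hu
      exact ⟨phiSum_eq_windowSum_of_eqOn hp (fun i hi => hc u hu i (by omega)) hnm,
        hc₀.trans hu.1, hu.2.trans_le hc₁⟩
    · rw [Real.volume_Ico, add_sub_cancel_left, ne_eq, ENNReal.ofReal_eq_zero, not_le]
      positivity

theorem d_eq_windowMin {p : ℕ} (hp : 2 ≤ p) (m : ℕ) : d p m = windowMin p m := by
  rw [d, windowMin]
  congr 1
  ext j
  exact pim_ne_zero_iff hp m j

/-- the sequence `s_j = d_{j+1} - d_j` is the fixed point of the
substitution `q ↦ b(q)` with initial value `s_0 = 0`: for every `m ≥ 0` and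
`0 ≤ i ≤ p-1`, `s_{pm+i} = b(s_m)_i`. -/
theorem statement_17 (p : ℕ) (hp : 3 ≤ p) :
    sseq p 0 = 0 ∧
    (∀ m i : ℕ, i ≤ p - 1 → sseq p (p * m + i) = blockLower (sseq p m) i) := by
  have hd : ∀ m i, i ≤ p →
      d p (p * m + i) = m * residueSum p 0 p + d p m + blockSum (sseq p m) i := by
    intro m i hi
    simp only [d_eq_windowMin (show 2 ≤ p by omega), sseq]
    exact windowMin_mul_add (by omega) m hi
  have hs : ∀ m i : ℕ, i ≤ p - 1 → sseq p (p * m + i) = blockLower (sseq p m) i := by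
    intro m i hi
    rw [sseq, show p * m + i + 1 = p * m + (i + 1) by ring, hd m (i + 1) (by omega),
      hd m i (by omega), blockSum_succ]
    omega
  exact ⟨by simpa [blockLower] using hs 0 0 (Nat.zero_le _), hs⟩

end Chacon
end

section
/- For every m ≥ 0, the sum of the degree and the lower degree of P_m^p equals (p−2)·m: D_m + d_m = (p−2)m. Equivalently, the mid-degree δ_m = (D_m + d_m)/2 equals (p−2)m/2. -/
/-!
The law of `φ^(m)` is symmetric about `(p-2)m/2`, and a nonempty set of naturals that is
symmetric under `j ↦ n - j` has maximum plus minimum equal to `n`.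

The symmetry comes from `x ↦ T(S^m x)`, where `T` complements every digit (`x_i ↦ p-1-x_i`):
`S(T(S x)) = T x` and `φ(T(S x)) + φ(x) = p-2`, so the orbit of `T(S^m x)` is the complement of
the orbit of `x` read backwards, and `φ^(m)(T(S^m x)) = (p-2)m - φ^(m)(x)`. This map preserves `λ`:
transported to `[0,1)` by the base-`p` digits, `S` is the von Neumann–Kakutani adding machine, a
translation of each `[1 - p^(-k), 1 - p^(-k-1))` onto `[p^(-k-1), p^(-k))`, and `T` is
`u ↦ 1 - u` away from the `p`-adic rationals.
-/

open MeasureTheory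
open scoped NNReal ENNReal

namespace Chacon

theorem sSup_add_sInf_of_forall_sub_mem {s : Set ℕ} {n : ℕ} (hs : s.Nonempty)
    (h : ∀ j ∈ s, j ≤ n ∧ n - j ∈ s) : sSup s + sInf s = n := by
  have hbdd : BddAbove s := ⟨n, fun j hj => (h j hj).1⟩
  have hsup := h _ (Nat.sSup_mem hs hbdd)
  have hinf := h _ (Nat.sInf_mem hs)
  have h1 : n - sInf s ≤ sSup s := le_csSup hbdd hinf.2
  have h2 : sInf s ≤ n - sSup s := Nat.sInf_le hsup.2
  omega

section FirstNot

variable {p : ℕ} {x : ℕ → ℕ}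

theorem eq_pred_of_lt_firstNot {j : ℕ} (hj : j < firstNot p x) : x j = p - 1 :=
  not_not.1 (Nat.notMem_of_lt_sInf hj)

theorem firstNot_eq_iff {k : ℕ} :
    firstNot p x = k ↔ (x k ≠ p - 1 ∧ ∀ j < k, x j = p - 1) ∨ (k = 0 ∧ ∀ i, x i = p - 1) := by
  constructor
  · rintro rfl
    rcases Set.eq_empty_or_nonempty {i | x i ≠ p - 1} with h | h
    · right
      refine ⟨by rw [firstNot, h, Nat.sInf_empty], fun i => ?_⟩
      simpa using Set.eq_empty_iff_forall_notMem.1 h i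
    · exact Or.inl ⟨Nat.sInf_mem h, fun j => eq_pred_of_lt_firstNot⟩
  · rintro (⟨hk, h⟩ | ⟨rfl, h⟩)
    · exact IsLeast.csInf_eq ⟨hk, fun j hj => not_lt.1 fun hlt => hj (h j hlt)⟩
    · simp [firstNot, h]

theorem firstNot_eq {k : ℕ} (hk : x k ≠ p - 1) (h : ∀ j < k, x j = p - 1) : firstNot p x = k :=
  firstNot_eq_iff.2 (Or.inl ⟨hk, h⟩)

theorem apply_firstNot_ne (hx : x ∈ GammaStar p) : x (firstNot p x) ≠ p - 1 :=
  Nat.sInf_mem hx.2.nonempty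

theorem apply_firstNot_add_two_le (hx : x ∈ GammaStar p) : x (firstNot p x) + 2 ≤ p := by
  have := hx.1 (firstNot p x)
  have := apply_firstNot_ne hx
  omega

end FirstNot

section Digits

variable {p : ℕ}

theorem digitsOf_eq_floor_sub (hp : 0 < p) {u : ℝ} (hu : 0 ≤ u) (n : ℕ) :
    (digitsOf p u n : ℤ) = ⌊u * (p : ℝ) ^ (n + 1)⌋ - p * ⌊u * (p : ℝ) ^ n⌋ := by
  have hfloor : ⌊u * (p : ℝ) ^ n⌋ = ⌊u * (p : ℝ) ^ (n + 1)⌋ / p := by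
    rw [← Int.floor_div_natCast, pow_succ, ← mul_assoc, mul_div_cancel_right₀]
    exact_mod_cast hp.ne'
  have hnonneg : 0 ≤ ⌊u * (p : ℝ) ^ (n + 1)⌋ := Int.floor_nonneg.2 (by positivity)
  rw [digitsOf, hfloor, Int.natCast_mod, Int.toNat_of_nonneg hnonneg, Int.emod_def]

theorem digitsOf_lt (hp : 0 < p) (u : ℝ) (n : ℕ) : digitsOf p u n < p :=
  Nat.mod_lt _ hp

theorem floor_mul_pow_add_of_digitsOf_eq (hp : 0 < p) {u : ℝ} (hu : 0 ≤ u) {n t : ℕ}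
    (h : ∀ j < t, digitsOf p u (n + j) = p - 1) :
    ⌊u * (p : ℝ) ^ (n + t)⌋ = (p : ℤ) ^ t * (⌊u * (p : ℝ) ^ n⌋ + 1) - 1 := by
  induction t with
  | zero => simp
  | succ t ih =>
    have hdigit := digitsOf_eq_floor_sub hp hu (n + t)
    rw [h t t.lt_succ_self, ih fun j hj => h j (by omega)] at hdigit
    rw [← add_assoc]
    push_cast [Nat.one_le_iff_ne_zero.2 hp.ne'] at hdigit
    linear_combination -hdigit

theorem floor_mul_pow_of_digitsOf_eq (hp : 0 < p) {u : ℝ} (hu : u ∈ Set.Ico (0 : ℝ) 1) {k : ℕ}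
    (h : ∀ j < k, digitsOf p u j = p - 1) : ⌊u * (p : ℝ) ^ k⌋ = (p : ℤ) ^ k - 1 := by
  have hfloor := floor_mul_pow_add_of_digitsOf_eq hp hu.1 (n := 0) (t := k) (by simpa using h)
  rwa [zero_add, pow_zero, mul_one, Int.floor_eq_zero_iff.2 hu, zero_add, mul_one] at hfloor

theorem digitsOf_mem_gammaStar (hp : 2 ≤ p) {u : ℝ} (hu : u ∈ Set.Ico (0 : ℝ) 1) :
    digitsOf p u ∈ GammaStar p := by
  refine ⟨digitsOf_lt (by omega) u, fun hfin => ?_⟩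
  obtain ⟨N, hN⟩ := hfin.bddAbove
  set a := ⌊u * (p : ℝ) ^ (N + 1)⌋
  -- Past `N` all digits are `p - 1`, which forces `u * p ^ (N + 1) ≥ a + 1`.
  have hrun (t : ℕ) : ⌊u * (p : ℝ) ^ (N + 1 + t)⌋ = (p : ℤ) ^ t * (a + 1) - 1 :=
    floor_mul_pow_add_of_digitsOf_eq (by omega) hu.1 fun j _ => by
      by_contra hj
      linarith [hN hj]
  have hε : 0 < (a + 1 : ℝ) - u * (p : ℝ) ^ (N + 1) := by
    linarith [Int.lt_floor_add_one (u * (p : ℝ) ^ (N + 1))]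
  obtain ⟨t, ht⟩ := pow_unbounded_of_one_lt (1 / ((a + 1 : ℝ) - u * (p : ℝ) ^ (N + 1)))
    (by exact_mod_cast hp : (1 : ℝ) < p)
  have hle := Int.floor_le (u * (p : ℝ) ^ (N + 1 + t))
  rw [hrun, pow_add] at hle
  rw [div_lt_iff₀ hε] at ht
  push_cast at hle
  nlinarith

end Digits

section RealOdometer

variable {p : ℕ}

noncomputable def odoShift (p k : ℕ) : ℝ := ((p : ℝ) ^ k)⁻¹ + ((p : ℝ) ^ (k + 1))⁻¹ - 1

noncomputable def odoReal (p : ℕ) (u : ℝ) : ℝ := u + odoShift p (firstNot p (digitsOf p u))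

/-- The reals whose expansion starts with exactly `k` digits `p - 1`. -/
def carryInterval (p k : ℕ) : Set ℝ := Set.Ico (1 - ((p : ℝ) ^ k)⁻¹) (1 - ((p : ℝ) ^ (k + 1))⁻¹)

theorem mem_carryInterval_firstNot (hp : 2 ≤ p) {u : ℝ} (hu : u ∈ Set.Ico (0 : ℝ) 1) :
    u ∈ carryInterval p (firstNot p (digitsOf p u)) := by
  set k := firstNot p (digitsOf p u)
  have hpk : (0 : ℝ) < (p : ℝ) ^ k := by positivity
  have hrun : ⌊u * (p : ℝ) ^ k⌋ = (p : ℤ) ^ k - 1 :=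
    floor_mul_pow_of_digitsOf_eq (by omega : 0 < p) hu fun j => eq_pred_of_lt_firstNot
  have hdigit := digitsOf_eq_floor_sub (p := p) (by omega) hu.1 k
  have hdigit_le : (digitsOf p u k : ℝ) + 2 ≤ p := by
    exact_mod_cast apply_firstNot_add_two_le (digitsOf_mem_gammaStar hp hu)
  have hlow := Int.floor_le (u * (p : ℝ) ^ k)
  have hhigh := Int.lt_floor_add_one (u * (p : ℝ) ^ (k + 1))
  rw [hrun] at hlow hdigit
  have hdigitR : (digitsOf p u k : ℝ) = ⌊u * (p : ℝ) ^ (k + 1)⌋ - p * ((p : ℝ) ^ k - 1) := by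
    exact_mod_cast hdigit
  push_cast at hlow
  constructor
  · rw [sub_le_comm, inv_eq_one_div, le_div_iff₀ hpk]
    linarith
  · rw [lt_sub_comm, inv_eq_one_div, div_lt_iff₀ (by positivity), pow_succ]
    rw [pow_succ] at hhigh hdigitR
    linarith

theorem carryInterval_subset (hp : 1 ≤ p) (k : ℕ) : carryInterval p k ⊆ Set.Ico (0 : ℝ) 1 := by
  have hp' : (1 : ℝ) ≤ p := by exact_mod_cast hp
  have h1 : ((p : ℝ) ^ k)⁻¹ ≤ 1 := inv_le_one_of_one_le₀ (one_le_pow₀ hp')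
  have h2 : 0 < ((p : ℝ) ^ (k + 1))⁻¹ := by positivity
  exact fun u hu => ⟨by linarith [hu.1], by linarith [hu.2]⟩

theorem pairwise_disjoint_carryInterval (hp : 1 ≤ p) :
    Pairwise (Function.onFun Disjoint (carryInterval p)) := by
  have hmono : Monotone fun k : ℕ => 1 - ((p : ℝ) ^ k)⁻¹ := fun a b hab =>
    sub_le_sub_left (inv_anti₀ (by positivity) (pow_le_pow_right₀ (by exact_mod_cast hp) hab)) 1
  intro i j hij
  rw [Function.onFun, carryInterval, carryInterval]
  simpa only [Order.succ_eq_add_one] using hmono.pairwise_disjoint_on_Ico_succ hij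

theorem mem_carryInterval_iff (hp : 2 ≤ p) {u : ℝ} (hu : u ∈ Set.Ico (0 : ℝ) 1) {k : ℕ} :
    u ∈ carryInterval p k ↔ firstNot p (digitsOf p u) = k := by
  refine ⟨fun hk => ?_, fun h => h ▸ mem_carryInterval_firstNot hp hu⟩
  by_contra hne
  exact Set.disjoint_left.1 (pairwise_disjoint_carryInterval (by omega) hne)
    (mem_carryInterval_firstNot hp hu) hk

theorem iUnion_carryInterval (hp : 2 ≤ p) : ⋃ k, carryInterval p k = Set.Ico (0 : ℝ) 1 :=
  subset_antisymm (Set.iUnion_subset (carryInterval_subset (by omega)))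
    fun u hu => Set.mem_iUnion.2 ⟨_, mem_carryInterval_firstNot hp hu⟩

theorem carryInterval_eq_preimage (p k : ℕ) :
    carryInterval p k =
      (· + odoShift p k) ⁻¹' Set.Ico ((p : ℝ) ^ (k + 1))⁻¹ ((p : ℝ) ^ k)⁻¹ := by
  rw [Set.preimage_add_const_Ico, carryInterval, odoShift]
  congr 1 <;> ring

theorem odoReal_eq_of_mem_carryInterval (hp : 2 ≤ p) {u : ℝ} {k : ℕ}
    (hu : u ∈ carryInterval p k) : odoReal p u = u + odoShift p k := by
  rw [odoReal, (mem_carryInterval_iff hp (carryInterval_subset (by omega) k hu)).1 hu]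

theorem odoReal_mem_Ico (hp : 2 ≤ p) {u : ℝ} (hu : u ∈ Set.Ico (0 : ℝ) 1) :
    odoReal p u ∈ Set.Ico ((p : ℝ) ^ (firstNot p (digitsOf p u) + 1))⁻¹
      ((p : ℝ) ^ firstNot p (digitsOf p u))⁻¹ := by
  have h := mem_carryInterval_firstNot hp hu
  rwa [carryInterval_eq_preimage] at h

theorem odoReal_mem_Ico_zero_one (hp : 2 ≤ p) {u : ℝ} (hu : u ∈ Set.Ico (0 : ℝ) 1) :
    odoReal p u ∈ Set.Ico (0 : ℝ) 1 := by
  obtain ⟨h1, h2⟩ := odoReal_mem_Ico hp hu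
  exact ⟨le_trans (by positivity) h1,
    h2.trans_le (inv_le_one_of_one_le₀ (one_le_pow₀ (by exact_mod_cast (by omega : 1 ≤ p))))⟩

theorem floor_odoReal_mul_pow_of_le (hp : 2 ≤ p) {u : ℝ} (hu : u ∈ Set.Ico (0 : ℝ) 1) {n : ℕ}
    (hn : n ≤ firstNot p (digitsOf p u)) : ⌊odoReal p u * (p : ℝ) ^ n⌋ = 0 := by
  obtain ⟨hlow, hhigh⟩ := odoReal_mem_Ico hp hu
  have hpk : (0 : ℝ) < (p : ℝ) ^ firstNot p (digitsOf p u) := by positivity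
  rw [Int.floor_eq_zero_iff]
  refine ⟨mul_nonneg (le_trans (by positivity) hlow) (by positivity), ?_⟩
  calc odoReal p u * (p : ℝ) ^ n
      ≤ odoReal p u * (p : ℝ) ^ firstNot p (digitsOf p u) :=
        mul_le_mul_of_nonneg_left (pow_le_pow_right₀ (by exact_mod_cast (by omega : 1 ≤ p)) hn)
          (le_trans (by positivity) hlow)
    _ < ((p : ℝ) ^ firstNot p (digitsOf p u))⁻¹ * (p : ℝ) ^ firstNot p (digitsOf p u) :=
        mul_lt_mul_of_pos_right hhigh hpk
    _ = 1 := inv_mul_cancel₀ hpk.ne'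

theorem floor_add_odoShift_mul_pow (hp : 0 < p) (u : ℝ) (k t : ℕ) :
    ⌊(u + odoShift p k) * (p : ℝ) ^ (k + 1 + t)⌋ =
      ⌊u * (p : ℝ) ^ (k + 1 + t)⌋ + ((p : ℤ) ^ (t + 1) + (p : ℤ) ^ t - (p : ℤ) ^ (k + 1 + t)) := by
  have hp' : (p : ℝ) ≠ 0 := by exact_mod_cast hp.ne'
  rw [← Int.floor_add_intCast]
  congr 1
  rw [odoShift]
  push_cast
  field_simp
  ring

theorem digitsOf_odoReal (hp : 2 ≤ p) {u : ℝ} (hu : u ∈ Set.Ico (0 : ℝ) 1) :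
    digitsOf p (odoReal p u) = odo p (digitsOf p u) := by
  have hp0 : 0 < p := by omega
  set k := firstNot p (digitsOf p u) with hk
  have hlow (n : ℕ) (hn : n ≤ k) := floor_odoReal_mul_pow_of_le hp hu hn
  have hhigh (t : ℕ) : ⌊odoReal p u * (p : ℝ) ^ (k + 1 + t)⌋ =
      ⌊u * (p : ℝ) ^ (k + 1 + t)⌋ + ((p : ℤ) ^ (t + 1) + (p : ℤ) ^ t - (p : ℤ) ^ (k + 1 + t)) :=
    floor_add_odoShift_mul_pow hp0 u k t
  funext i
  have hv := digitsOf_eq_floor_sub hp0 (odoReal_mem_Ico_zero_one hp hu).1 i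
  have hu' := digitsOf_eq_floor_sub hp0 hu.1 i
  simp only [odo, ← hk]
  rcases lt_trichotomy i k with hik | hik | hik
  · rw [if_pos hik]
    rw [hlow i hik.le, hlow (i + 1) hik] at hv
    omega
  · subst hik
    rw [if_neg (lt_irrefl _), if_pos rfl]
    have hrun : ⌊u * (p : ℝ) ^ k⌋ = (p : ℤ) ^ k - 1 :=
      floor_mul_pow_of_digitsOf_eq hp0 hu fun j => eq_pred_of_lt_firstNot
    have hnext := hhigh 0
    simp only [add_zero, zero_add, pow_one, pow_zero] at hnext
    rw [hlow k le_rfl, hnext] at hv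
    rw [hrun] at hu'
    zify
    linear_combination hv - hu'
  · obtain ⟨t, rfl⟩ : ∃ t, i = k + 1 + t := ⟨i - k - 1, by omega⟩
    rw [if_neg (by omega), if_neg (by omega)]
    have hnext := hhigh (t + 1)
    rw [← add_assoc] at hnext
    rw [hhigh t, hnext] at hv
    zify
    linear_combination hv - hu'

end RealOdometer

section Complement

variable {p : ℕ}

def digitCompl (p : ℕ) (x : ℕ → ℕ) : ℕ → ℕ := fun i => p - 1 - x i

theorem ae_mul_pow_notMem_range_intCast (hp : 0 < p) :
    ∀ᵐ v : ℝ, ∀ n : ℕ, v * (p : ℝ) ^ n ∉ Set.range ((↑) : ℤ → ℝ) := by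
  refine ae_all_iff.2 fun n => ?_
  have hpn : (p : ℝ) ^ n ≠ 0 := pow_ne_zero _ (by exact_mod_cast hp.ne')
  exact ((Set.countable_range _).preimage (mul_left_injective₀ hpn)).ae_notMem volume

theorem digitsOf_one_sub (hp : 0 < p) {v : ℝ} (hv : v ∈ Set.Ico (0 : ℝ) 1)
    (hint : ∀ n : ℕ, v * (p : ℝ) ^ n ∉ Set.range ((↑) : ℤ → ℝ)) :
    digitsOf p (1 - v) = digitCompl p (digitsOf p v) := by
  have hfloor (n : ℕ) : ⌊(1 - v) * (p : ℝ) ^ n⌋ = (p : ℤ) ^ n - ⌊v * (p : ℝ) ^ n⌋ - 1 := by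
    rw [show (1 - v) * (p : ℝ) ^ n = -(v * (p : ℝ) ^ n) + (((p : ℤ) ^ n : ℤ) : ℝ) by
        push_cast; ring,
      Int.floor_add_intCast, Int.floor_neg, (Int.ceil_eq_floor_add_one_iff_notMem _).2 (hint n)]
    ring
  have hv0 : 0 ≤ 1 - v := by linarith [hv.2]
  funext i
  have hdigit := digitsOf_eq_floor_sub hp hv0 i
  have hdigit' := digitsOf_eq_floor_sub hp hv.1 i
  have hlt := digitsOf_lt hp v i
  rw [hfloor, hfloor] at hdigit
  simp only [digitCompl]
  zify [hp, Nat.le_sub_one_of_lt hlt]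
  linear_combination hdigit + hdigit'

end Complement

section Odometer

variable {p : ℕ} {x : ℕ → ℕ}

theorem odo_mem_gammaStar (hx : x ∈ GammaStar p) : odo p x ∈ GammaStar p := by
  have hk := apply_firstNot_add_two_le hx
  refine ⟨fun i => ?_, ?_⟩
  · have := hx.1 i
    simp only [odo]
    split_ifs with h1 h2
    · omega
    · subst h2
      omega
    · exact this
  · refine (hx.2.sdiff (Set.finite_Iic (firstNot p x))).mono fun i hi => ?_
    obtain ⟨hi, hik⟩ := hi
    simp only [Set.mem_Iic, not_le] at hik
    simpa [odo, hik.not_gt, hik.ne'] using hi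

theorem odo_iterate_mem_gammaStar (hx : x ∈ GammaStar p) (n : ℕ) :
    (odo p)^[n] x ∈ GammaStar p := by
  induction n with
  | zero => exact hx
  | succ n ih => exact Function.iterate_succ_apply' (odo p) n x ▸ odo_mem_gammaStar ih

theorem digitCompl_odo_apply (j : ℕ) :
    digitCompl p (odo p x) j =
      if j < firstNot p x then p - 1
      else if j = firstNot p x then p - 2 - x j
      else p - 1 - x j := by
  simp only [digitCompl, odo]
  split_ifs with h1 h2
  · omega
  · omega
  · rfl

theorem firstNot_digitCompl_odo (hp : 2 ≤ p) :
    firstNot p (digitCompl p (odo p x)) = firstNot p x :=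
  firstNot_eq (by rw [digitCompl_odo_apply]; simp; omega)
    fun j hj => by rw [digitCompl_odo_apply, if_pos hj]

theorem odo_digitCompl_odo (hp : 2 ≤ p) (hx : x ∈ GammaStar p) :
    odo p (digitCompl p (odo p x)) = digitCompl p x := by
  have hk := apply_firstNot_add_two_le hx
  funext j
  simp only [odo, firstNot_digitCompl_odo hp, digitCompl]
  split_ifs with h1 h2
  · rw [eq_pred_of_lt_firstNot h1, Nat.sub_self]
  · subst h2
    omega
  · rfl

theorem phi_digitCompl_odo_add_phi (hp : 2 ≤ p) (hx : x ∈ GammaStar p) :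
    phi p (digitCompl p (odo p x)) + phi p x = p - 2 := by
  have hk := apply_firstNot_add_two_le hx
  simp only [phi, firstNot_digitCompl_odo hp, digitCompl_odo_apply, lt_irrefl, if_false,
    if_true]
  omega

theorem odo_iterate_digitCompl_odo_iterate (hp : 2 ≤ p) (hx : x ∈ GammaStar p) {m j : ℕ}
    (hj : j ≤ m) :
    (odo p)^[j] (digitCompl p ((odo p)^[m] x)) = digitCompl p ((odo p)^[m - j] x) := by
  induction j with
  | zero => rfl
  | succ j ih =>
    obtain ⟨n, hn⟩ : ∃ n, m - j = n + 1 := ⟨m - j - 1, by omega⟩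
    rw [Function.iterate_succ_apply', ih (by omega), hn, Function.iterate_succ_apply',
      odo_digitCompl_odo hp (odo_iterate_mem_gammaStar hx n), show m - (j + 1) = n by omega]

theorem phiSum_digitCompl_odo_iterate_add (hp : 2 ≤ p) (hx : x ∈ GammaStar p) (m : ℕ) :
    phiSum p m (digitCompl p ((odo p)^[m] x)) + phiSum p m x = (p - 2) * m := by
  rw [phiSum, phiSum, ← Finset.sum_range_reflect (fun j => phi p ((odo p)^[j] x)) m,
    ← Finset.sum_add_distrib]
  calc ∑ j ∈ Finset.range m, (phi p ((odo p)^[j] (digitCompl p ((odo p)^[m] x))) +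
        phi p ((odo p)^[m - 1 - j] x))
      = ∑ _j ∈ Finset.range m, (p - 2) := Finset.sum_congr rfl fun j hj => by
        rw [Finset.mem_range] at hj
        rw [odo_iterate_digitCompl_odo_iterate hp hx (by omega),
          show m - j = m - 1 - j + 1 by omega, Function.iterate_succ_apply']
        exact phi_digitCompl_odo_add_phi hp (odo_iterate_mem_gammaStar hx _)
    _ = (p - 2) * m := by rw [Finset.sum_const, Finset.card_range, smul_eq_mul, mul_comm]

theorem phiSum_le (hp : 2 ≤ p) (hx : x ∈ GammaStar p) (m : ℕ) :
    phiSum p m x ≤ (p - 2) * m :=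
  phiSum_digitCompl_odo_iterate_add hp hx m ▸ Nat.le_add_left _ _

end Odometer

section Measurability

theorem measurable_odoReal (p : ℕ) : Measurable (odoReal p) :=
  measurable_id.add ((Measurable.of_discrete (f := odoShift p)).comp
    ((measurable_firstNot p).comp (measurable_digitsOf p)))

end Measurability

section LebesgueRealization

local notation "μ₀" => volume.restrict (Set.Ico (0 : ℝ) 1)

variable {p : ℕ}

theorem iUnion_Ico_inv_pow {b : ℝ} (hb : 1 < b) :
    ⋃ k : ℕ, Set.Ico (b ^ (k + 1))⁻¹ (b ^ k)⁻¹ = Set.Ioo 0 1 := by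
  have hb0 : 0 < b := one_pos.trans hb
  ext v
  simp only [Set.mem_iUnion, Set.mem_Ico, Set.mem_Ioo]
  constructor
  · rintro ⟨k, hlow, hhigh⟩
    exact ⟨lt_of_lt_of_le (by positivity) hlow,
      hhigh.trans_le (inv_le_one_of_one_le₀ (one_le_pow₀ hb.le))⟩
  · rintro ⟨hv0, hv1⟩
    obtain ⟨n, hlow, hhigh⟩ := exists_mem_Ioc_zpow (inv_pos.2 hv0) hb
    lift n to ℕ using by
      by_contra hn
      have : b ^ (n + 1) ≤ 1 := zpow_le_one_of_nonpos₀ hb.le (by omega)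
      linarith [one_lt_inv_iff₀.2 ⟨hv0, hv1⟩]
    refine ⟨n, ?_, ?_⟩
    · rw [inv_le_comm₀ (by positivity) hv0]
      exact_mod_cast hhigh
    · rw [lt_inv_comm₀ hv0 (by positivity)]
      exact_mod_cast hlow

theorem measurePreserving_odoReal (hp : 2 ≤ p) : MeasurePreserving (odoReal p) μ₀ μ₀ := by
  have hp1 : (1 : ℝ) < p := by exact_mod_cast hp
  set B : ℕ → Set ℝ := fun k => Set.Ico ((p : ℝ) ^ (k + 1))⁻¹ ((p : ℝ) ^ k)⁻¹
  have hB : Pairwise (Function.onFun Disjoint B) := by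
    have hanti : Antitone fun k : ℕ => ((p : ℝ) ^ k)⁻¹ := fun a b hab =>
      inv_anti₀ (by positivity) (pow_le_pow_right₀ hp1.le hab)
    simpa only [Order.succ_eq_add_one] using hanti.pairwise_disjoint_on_Ico_succ
  have hpiece (k : ℕ) :
      (volume.restrict (carryInterval p k)).map (odoReal p) = volume.restrict (B k) := by
    rw [Measure.map_congr (ae_restrict_of_forall_mem (s := carryInterval p k) measurableSet_Ico
      fun u hu => odoReal_eq_of_mem_carryInterval hp hu), carryInterval_eq_preimage]
    exact ((measurePreserving_add_right volume (odoShift p k)).restrict_preimage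
      measurableSet_Ico).map_eq
  refine ⟨measurable_odoReal p, ?_⟩
  calc (μ₀).map (odoReal p)
      = (Measure.sum fun k => volume.restrict (carryInterval p k)).map (odoReal p) := by
        rw [← Measure.restrict_iUnion (pairwise_disjoint_carryInterval (by omega))
          fun _ => measurableSet_Ico, iUnion_carryInterval hp]
    _ = Measure.sum fun k => volume.restrict (B k) := by
        rw [Measure.map_sum (measurable_odoReal p).aemeasurable]
        exact congrArg Measure.sum (funext hpiece)
    _ = μ₀ := by
        rw [← Measure.restrict_iUnion hB fun _ => measurableSet_Ico, iUnion_Ico_inv_pow hp1]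
        exact Measure.restrict_congr_set Ioo_ae_eq_Ico

theorem measurePreserving_one_sub : MeasurePreserving (fun u : ℝ => 1 - u) μ₀ μ₀ := by
  have h := (Measure.measurePreserving_sub_left volume (1 : ℝ)).restrict_preimage
    (measurableSet_Ioc (a := (0 : ℝ)) (b := 1))
  rwa [Set.preimage_const_sub_Ioc, sub_zero, sub_self,
    Measure.restrict_congr_set (Ico_ae_eq_Ioc (a := (0 : ℝ)) (b := 1)).symm] at h

theorem digitsOf_odoReal_iterate (hp : 2 ≤ p) {u : ℝ} (hu : u ∈ Set.Ico (0 : ℝ) 1) (n : ℕ) :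
    digitsOf p ((odoReal p)^[n] u) = (odo p)^[n] (digitsOf p u) := by
  induction n with
  | zero => rfl
  | succ n ih =>
    rw [Function.iterate_succ_apply', Function.iterate_succ_apply', ← ih,
      digitsOf_odoReal hp (Set.MapsTo.iterate (fun _ => odoReal_mem_Ico_zero_one hp) n hu)]

theorem ae_digitsOf_one_sub_odoReal_iterate (hp : 2 ≤ p) (m : ℕ) :
    ∀ᵐ u ∂μ₀, digitsOf p (1 - (odoReal p)^[m] u) = digitCompl p ((odo p)^[m] (digitsOf p u)) := by
  have hgood : ∀ᵐ v ∂μ₀,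
      v ∈ Set.Ico (0 : ℝ) 1 ∧ ∀ n : ℕ, v * (p : ℝ) ^ n ∉ Set.range ((↑) : ℤ → ℝ) :=
    (ae_restrict_mem measurableSet_Ico).and
      (ae_restrict_of_ae (ae_mul_pow_notMem_range_intCast (by omega)))
  filter_upwards [ae_restrict_mem measurableSet_Ico,
    ((measurePreserving_odoReal hp).iterate m).quasiMeasurePreserving.ae hgood]
    with u hu ⟨hv, hint⟩
  rw [digitsOf_one_sub (by omega) hv hint, digitsOf_odoReal_iterate hp hu]

theorem pim_eq (p m j : ℕ) : pim p m j = μ₀ {u | phiSum p m (digitsOf p u) = j} :=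
  Measure.map_apply (measurable_digitsOf p) (measurable_phiSum p m (measurableSet_singleton j))

theorem pim_eq_zero_of_lt (hp : 2 ≤ p) {m j : ℕ} (hj : (p - 2) * m < j) : pim p m j = 0 := by
  rw [pim_eq, measure_eq_zero_iff_ae_notMem]
  filter_upwards [ae_restrict_mem measurableSet_Ico] with u hu
  exact ((phiSum_le hp (digitsOf_mem_gammaStar hp hu) m).trans_lt hj).ne

theorem exists_pim_ne_zero (p m : ℕ) : ∃ j, pim p m j ≠ 0 := by
  by_contra! h
  have hcover : ⋃ j, {x | phiSum p m x = j} = Set.univ :=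
    Set.iUnion_eq_univ_iff.2 fun x => ⟨_, rfl⟩
  have hnull := measure_iUnion_null (μ := lam p) h
  rw [hcover, lam, Measure.map_apply (measurable_digitsOf p) .univ] at hnull
  simp at hnull

theorem pim_sub (hp : 2 ≤ p) {m j : ℕ} (hj : j ≤ (p - 2) * m) :
    pim p m ((p - 2) * m - j) = pim p m j := by
  have hmp := measurePreserving_one_sub.comp ((measurePreserving_odoReal hp).iterate m)
  have hmeas : MeasurableSet {u | phiSum p m (digitsOf p u) = j} :=
    (measurable_phiSum p m).comp (measurable_digitsOf p) (measurableSet_singleton j)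
  rw [pim_eq, pim_eq, ← hmp.measure_preimage hmeas.nullMeasurableSet]
  refine measure_congr (Filter.eventuallyEq_set.2 ?_)
  filter_upwards [ae_restrict_mem measurableSet_Ico, ae_digitsOf_one_sub_odoReal_iterate hp m]
    with u hu hdigits
  have := phiSum_digitCompl_odo_iterate_add hp (digitsOf_mem_gammaStar hp hu) m
  simp only [Set.mem_ofPred_eq, Set.mem_preimage, Function.comp_apply, hdigits]
  omega

end LebesgueRealization

/-- `D_m + d_m = (p-2) m` for every `m ≥ 0`; equivalently the
mid-degree `δ_m = (D_m + d_m)/2` equals `(p-2) m / 2`. -/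
theorem statement_19 (p : ℕ) (hp : 3 ≤ p) (m : ℕ) :
    D p m + d p m = (p - 2) * m ∧
    ((D p m : ℝ) + (d p m : ℝ)) / 2 = ((p : ℝ) - 2) * m / 2 := by
  have hp2 : 2 ≤ p := by omega
  have hsum : D p m + d p m = (p - 2) * m := by
    refine sSup_add_sInf_of_forall_sub_mem (exists_pim_ne_zero p m) fun j hj => ?_
    have hjM : j ≤ (p - 2) * m := not_lt.1 fun hlt => hj (pim_eq_zero_of_lt hp2 hlt)
    exact ⟨hjM, by rwa [Set.mem_ofPred_eq, pim_sub hp2 hjM]⟩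
  refine ⟨hsum, ?_⟩
  rw [← Nat.cast_add, hsum]
  push_cast [Nat.cast_sub hp2]
  ring

end Chacon
end
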